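/- arXiv:2209.08304 — 2 statements merged into one kernel-verified Lean document; each statement's English description precedes it below -/
import Mathlib

section
/- Let U ⊆ ℝ^m be open, Q > 2, α ≥ 0, and let ψ be a smooth strictly positive function on U satisfying the Laplacian lower bound Δψ ≥ (Q−1)·|∇ψ|²/ψ on U. Then for every f ∈ C_c^∞(U) the weighted Hardy inequality ∫_U ψ^α·(|∇ψ|²/ψ²)·f² dx ≤ (2/(Q+α−2))²·∫_U ψ^α·|∇f|² dx holds. -/
open Real MeasureTheory
open scoped Manifold ContDiff

/-- The Euclidean Laplacian of `f : ℝ^m → ℝ`, as the sum of the second partial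
derivatives along the coordinate directions. -/
noncomputable def lap {m : ℕ} (f : EuclideanSpace ℝ (Fin m) → ℝ)
    (x : EuclideanSpace ℝ (Fin m)) : ℝ :=
  ∑ i : Fin m,
    fderiv ℝ (fun y => fderiv ℝ f y (EuclideanSpace.single i 1)) x (EuclideanSpace.single i 1)

noncomputable def esingle {m : ℕ} (i : Fin m) : EuclideanSpace ℝ (Fin m) :=
  EuclideanSpace.single i 1

lemma lap_eq {m : ℕ} (f : EuclideanSpace ℝ (Fin m) → ℝ) (x : EuclideanSpace ℝ (Fin m)) :
    lap f x = ∑ i, fderiv ℝ (fun y => fderiv ℝ f y (esingle i)) x (esingle i) := rfl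

lemma grad_apply {m : ℕ} (g : EuclideanSpace ℝ (Fin m) → ℝ) (x : EuclideanSpace ℝ (Fin m))
    (i : Fin m) : gradient g x i = fderiv ℝ g x (esingle i) := by
  have h : (inner ℝ (gradient g x) (esingle i) : ℝ) = fderiv ℝ g x (esingle i) := by
    rw [gradient, InnerProductSpace.toDual_symm_apply]
  rw [← h, esingle, EuclideanSpace.inner_single_right]
  simp

lemma norm_grad_sq {m : ℕ} (g : EuclideanSpace ℝ (Fin m) → ℝ) (x : EuclideanSpace ℝ (Fin m)) :
    ‖gradient g x‖ ^ 2 = ∑ i, fderiv ℝ g x (esingle i) ^ 2 := by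
  rw [EuclideanSpace.norm_eq, Real.sq_sqrt (by positivity)]
  exact Finset.sum_congr rfl fun i _ => by
    rw [← grad_apply]; simp [Real.norm_eq_abs, sq_abs]

lemma inner_grad {m : ℕ} (g h : EuclideanSpace ℝ (Fin m) → ℝ) (x : EuclideanSpace ℝ (Fin m)) :
    (inner ℝ (gradient g x) (gradient h x) : ℝ)
      = ∑ i, fderiv ℝ g x (esingle i) * fderiv ℝ h x (esingle i) := by
  rw [PiLp.inner_apply]
  exact Finset.sum_congr rfl fun i _ => by
    rw [← grad_apply, ← grad_apply]; simp [RCLike.inner_apply, mul_comm]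

lemma amgm_aux {c p q g1 g2 s ip : ℝ} (hc : 0 < c) (hp : 0 < p) (hq : 0 < q)
    (hg1 : 0 ≤ g1) (hg2 : 0 ≤ g2) (hip : |ip| ≤ g2 * g1) :
    |p * q * ip * (2 * s)| ≤ c / 2 * (p ^ 2 * g1 ^ 2 * s ^ 2) + 2 / c * (q ^ 2 * g2 ^ 2) := by
  have h1 : |p * q * ip * (2 * s)| = p * q * |ip| * (2 * |s|) := by
    rw [abs_mul, abs_mul, abs_mul, abs_of_pos hp, abs_of_pos hq, abs_mul]
    norm_num
  have h2 : p * q * |ip| * (2 * |s|) ≤ 2 * (p * g1 * |s|) * (q * g2) := by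
    have h3 := mul_le_mul_of_nonneg_left hip
      (by positivity : (0:ℝ) ≤ 2 * p * q * |s|)
    nlinarith [abs_nonneg s, abs_nonneg ip]
  have h4 : 2 * (p * g1 * |s|) * (q * g2)
      ≤ c / 2 * (p * g1 * |s|) ^ 2 + 2 / c * (q * g2) ^ 2 := by
    rw [div_mul_eq_mul_div, div_mul_eq_mul_div,
      div_add_div _ _ (two_ne_zero) (ne_of_gt hc), le_div_iff₀ (by positivity)]
    nlinarith [sq_nonneg (c * (p * g1 * |s|) - 2 * (q * g2))]
  have h5 : (p * g1 * |s|) ^ 2 = p ^ 2 * g1 ^ 2 * s ^ 2 := by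
    rw [mul_pow, mul_pow, sq_abs]
  have h6 : (q * g2) ^ 2 = q ^ 2 * g2 ^ 2 := by ring
  rw [h1]
  rw [h5, h6] at h4
  linarith [h2, h4]

set_option maxHeartbeats 1600000 in
theorem weighted_hardy_from_laplacian_lower_bound {m : ℕ}
    (U : Set (EuclideanSpace ℝ (Fin m))) (hU : IsOpen U)
    (Q α : ℝ) (hQ : 2 < Q) (hα : 0 ≤ α)
    (ψ : EuclideanSpace ℝ (Fin m) → ℝ)
    (hψ : ContDiffOn ℝ (⊤ : ℕ∞) ψ U) (hψpos : ∀ x ∈ U, 0 < ψ x)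
    (hψlower : ∀ x ∈ U, lap ψ x ≥ (Q - 1) / ψ x * ‖gradient ψ x‖ ^ 2) :
    ∀ f : EuclideanSpace ℝ (Fin m) → ℝ,
      ContDiff ℝ (⊤ : ℕ∞) f → HasCompactSupport f → tsupport f ⊆ U →
      ∫ x in U, ψ x ^ α * (‖gradient ψ x‖ ^ 2 / (ψ x) ^ 2) * (f x) ^ 2
        ≤ (2 / (Q + α - 2)) ^ 2 * ∫ x in U, ψ x ^ α * ‖gradient f x‖ ^ 2 := by
  intro f hf hfc hfU
  classical
  set c : ℝ := Q + α - 2 with hc_def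
  have hc : 0 < c := by simp only [hc_def]; linarith
  set K := tsupport f with hK_def
  have hKU : K ⊆ U := hfU
  have hKc : IsCompact K := hfc
  have hfK : ∀ x, x ∉ K → f x = 0 := fun x hx => image_eq_zero_of_notMem_tsupport hx
  -- cutoff function
  obtain ⟨K₁, hK₁c, hKK₁, hK₁U⟩ := exists_compact_between hKc hU hKU
  obtain ⟨χ, hχ1, hχ0, hχ01⟩ :=
    exists_contMDiffMap_one_nhds_of_subset_interior (𝓘(ℝ, EuclideanSpace ℝ (Fin m))) (n := (⊤ : ℕ∞))
      (isClosed_tsupport f) hKK₁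
  have hχsm : ContDiff ℝ ∞ (χ : EuclideanSpace ℝ (Fin m) → ℝ) := by
    have := χ.contMDiff
    rw [contMDiff_iff_contDiff] at this
    exact this
  obtain ⟨O₀, hO₀open, hKO₀, hχ1'⟩ := eventually_nhdsSet_iff_exists.mp hχ1
  set O := O₀ ∩ U with hO_def
  have hOopen : IsOpen O := hO₀open.inter hU
  have hKO : K ⊆ O := Set.subset_inter hKO₀ hKU
  have hOU : O ⊆ U := Set.inter_subset_right
  have hχO : ∀ x ∈ O, χ x = 1 := fun x hx => hχ1' x hx.1
  -- basic smoothness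
  have hψU : ContDiffOn ℝ ∞ ψ U := hψ.of_le (by simp)
  have hfU' : ContDiff ℝ ∞ f := hf.of_le (by simp)
  have h1top : (∞ : WithTop ℕ∞) ≠ 0 := by simp
  set d : Fin m → EuclideanSpace ℝ (Fin m) → ℝ :=
    fun i => (fun y => fderiv ℝ ψ y (esingle i)) with hd_def
  have hdU : ∀ i, ContDiffOn ℝ ∞ (d i) U := by
    intro i
    have h1 : ContDiffOn ℝ ∞ (fderiv ℝ ψ) U :=
      ((contDiffOn_infty_iff_fderiv_of_isOpen hU).mp hψU).2
    exact h1.clm_apply contDiffOn_const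
  have hψat : ∀ x ∈ U, ContDiffAt ℝ ∞ ψ x := fun x hx => hψU.contDiffAt (hU.mem_nhds hx)
  have hdat : ∀ i, ∀ x ∈ U, ContDiffAt ℝ ∞ (d i) x :=
    fun i x hx => (hdU i).contDiffAt (hU.mem_nhds hx)
  have hrpow : ∀ (r : ℝ), ∀ x ∈ U, ContDiffAt ℝ ∞ (fun y => ψ y ^ r) x :=
    fun r x hx => (hψat x hx).rpow_const_of_ne (ne_of_gt (hψpos x hx))
  -- the global functions
  set F : EuclideanSpace ℝ (Fin m) → ℝ := fun x => f x ^ 2 with hF_def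
  have hFsm : ContDiff ℝ ∞ F := hfU'.pow 2
  set V : Fin m → EuclideanSpace ℝ (Fin m) → ℝ :=
    fun i x => if x ∈ U then χ x * (ψ x ^ (α - 1) * d i x) else 0 with hV_def
  set G : EuclideanSpace ℝ (Fin m) → ℝ :=
    fun x => (if x ∈ U then ψ x ^ (α - 2) * ‖gradient ψ x‖ ^ 2 else 0) * f x ^ 2 with hG_def
  set Hh : EuclideanSpace ℝ (Fin m) → ℝ :=
    fun x => (if x ∈ U then ψ x ^ α else 0) * ‖gradient f x‖ ^ 2 with hH_def
  set L : EuclideanSpace ℝ (Fin m) → ℝ :=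
    fun x => (if x ∈ U then (α - 1) * ψ x ^ (α - 2) * ‖gradient ψ x‖ ^ 2
      + ψ x ^ (α - 1) * lap ψ x else 0) * f x ^ 2 with hL_def
  set R : EuclideanSpace ℝ (Fin m) → ℝ :=
    fun x => (if x ∈ U then ψ x ^ (α - 1) * inner ℝ (gradient f x) (gradient ψ x) else 0)
      * (2 * f x) with hR_def
  -- smoothness of V
  have hVsm : ∀ i, ContDiff ℝ ∞ (V i) := by
    intro i
    rw [contDiff_iff_contDiffAt]
    intro x
    by_cases hx : x ∈ U
    · have h : ContDiffAt ℝ ∞ (fun y => χ y * (ψ y ^ (α - 1) * d i y)) x :=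
        (hχsm.contDiffAt).mul ((hrpow _ x hx).mul (hdat i x hx))
      apply h.congr_of_eventuallyEq
      filter_upwards [hU.mem_nhds hx] with y hy
      simp only [hV_def, if_pos hy]
    · have hx1 : x ∈ (K₁ᶜ : Set _) := fun h => hx (hK₁U h)
      have h0 : ContDiffAt ℝ ∞ (fun _ : EuclideanSpace ℝ (Fin m) => (0:ℝ)) x := contDiffAt_const
      apply h0.congr_of_eventuallyEq
      filter_upwards [hK₁c.isClosed.isOpen_compl.mem_nhds hx1] with y hy
      by_cases hyU : y ∈ U
      · simp [hV_def, hyU, hχ0 y hy]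
      · simp [hV_def, hyU]
  -- vanishing lemmas
  have hgradf0 : ∀ x, x ∉ K → gradient f x = 0 := by
    intro x hx
    have : fderiv ℝ f x = 0 := by
      by_contra h
      exact hx (support_fderiv_subset ℝ (Function.mem_support.mpr h))
    rw [gradient, this, map_zero]
  have hfderivF0 : ∀ x, x ∉ K → fderiv ℝ F x = 0 := by
    intro x hx
    have hev : F =ᶠ[nhds x] (fun _ => (0:ℝ)) := by
      filter_upwards [hKc.isClosed.isOpen_compl.mem_nhds hx] with y hy
      simp [hF_def, hfK y hy]
    rw [hev.fderiv_eq]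
    exact fderiv_const_apply 0
  -- continuity helper
  have cont_aux : ∀ (a b : EuclideanSpace ℝ (Fin m) → ℝ), ContinuousOn a U → Continuous b →
      (∀ x, x ∉ K → b x = 0) → Continuous (fun x => (if x ∈ U then a x else 0) * b x) := by
    intro a b ha hb hb0
    rw [continuous_iff_continuousAt]
    intro x
    by_cases hx : x ∈ U
    · have h : ContinuousAt (fun y => a y * b y) x :=
        (ha.continuousAt (hU.mem_nhds hx)).mul hb.continuousAt
      apply h.congr
      filter_upwards [hU.mem_nhds hx] with y hy
      simp [if_pos hy]
    · have hxK : x ∉ K := fun h => hx (hKU h)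
      have h0 : ContinuousAt (fun _ : EuclideanSpace ℝ (Fin m) => (0:ℝ)) x := continuousAt_const
      apply h0.congr
      filter_upwards [hKc.isClosed.isOpen_compl.mem_nhds hxK] with y hy
      simp [hb0 y hy]
  have int_aux : ∀ (g : EuclideanSpace ℝ (Fin m) → ℝ), Continuous g →
      (∀ x, x ∉ K → g x = 0) → Integrable g := by
    intro g hg hg0
    exact hg.integrable_of_hasCompactSupport (HasCompactSupport.intro hKc hg0)
  -- continuity ingredients
  have hψrpow_cont : ∀ (r : ℝ), ContinuousOn (fun x => ψ x ^ r) U := by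
    intro r
    exact hψU.continuousOn.rpow_const (fun x hx => Or.inl (ne_of_gt (hψpos x hx)))
  have hgradψ_cont : ContinuousOn (gradient ψ) U := by
    have h1 : ContinuousOn (fderiv ℝ ψ) U :=
      ((contDiffOn_infty_iff_fderiv_of_isOpen hU).mp hψU).2.continuousOn
    exact ((InnerProductSpace.toDual ℝ
      (EuclideanSpace ℝ (Fin m))).symm.continuous).comp_continuousOn h1
  have hgradf_cont : Continuous (gradient f) := by
    have h1 : Continuous (fderiv ℝ f) := hfU'.continuous_fderiv h1top
    exact ((InnerProductSpace.toDual ℝ (EuclideanSpace ℝ (Fin m))).symm.continuous).comp h1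
  have hlap_cont : ContinuousOn (lap ψ) U := by
    have h : ∀ i : Fin m, ContinuousOn
        (fun x => fderiv ℝ (fun y => fderiv ℝ ψ y (esingle i)) x (esingle i)) U := by
      intro i
      have h1 : ContinuousOn (fderiv ℝ (d i)) U :=
        ((contDiffOn_infty_iff_fderiv_of_isOpen hU).mp (hdU i)).2.continuousOn
      exact h1.clm_apply continuousOn_const
    exact continuousOn_finset_sum Finset.univ (fun i _ => h i)
  have hfd_cont : ∀ (g : EuclideanSpace ℝ (Fin m) → ℝ), ContDiff ℝ ∞ g →
      ∀ (v : EuclideanSpace ℝ (Fin m)), Continuous (fun x => fderiv ℝ g x v) := by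
    intro g hg v
    exact (hg.continuous_fderiv h1top).clm_apply continuous_const
  -- integrability of the main functions
  have hGcont : Continuous G :=
    cont_aux _ _ (((hψrpow_cont (α-2)).mul (hgradψ_cont.norm.pow 2))) (hfU'.continuous.pow 2)
      (fun x hx => by simp [hfK x hx])
  have hGint : Integrable G := int_aux _ hGcont (fun x hx => by simp [hG_def, hfK x hx])
  have hHcont : Continuous Hh :=
    cont_aux _ _ (hψrpow_cont α) (hgradf_cont.norm.pow 2)
      (fun x hx => by simp [hgradf0 x hx])
  have hHint : Integrable Hh := int_aux _ hHcont (fun x hx => by simp [hH_def, hgradf0 x hx])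
  have hLcont : Continuous L := by
    apply cont_aux
    · exact ((continuousOn_const.mul (hψrpow_cont (α-2))).mul (hgradψ_cont.norm.pow 2)).add
        ((hψrpow_cont (α-1)).mul hlap_cont)
    · exact hfU'.continuous.pow 2
    · intro x hx; simp [hfK x hx]
  have hLint : Integrable L := int_aux _ hLcont (fun x hx => by simp [hL_def, hfK x hx])
  have hRcont : Continuous R := by
    apply cont_aux
    · exact (hψrpow_cont (α-1)).mul ((hgradf_cont.continuousOn).inner hgradψ_cont)
    · exact continuous_const.mul hfU'.continuous
    · intro x hx; simp [hfK x hx]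
  have hRint : Integrable R := int_aux _ hRcont (fun x hx => by simp [hR_def, hfK x hx])
  -- integration by parts
  have hIBP : ∀ i : Fin m,
      ∫ x, F x * fderiv ℝ (V i) x (esingle i) = - ∫ x, fderiv ℝ F x (esingle i) * V i x := by
    intro i
    apply integral_mul_fderiv_eq_neg_fderiv_mul_of_integrable
    · apply int_aux
      · exact (hfd_cont F hFsm (esingle i)).mul (hVsm i).continuous
      · intro x hx; simp [hfderivF0 x hx]
    · apply int_aux
      · exact (hfU'.continuous.pow 2).mul (hfd_cont (V i) (hVsm i) (esingle i))
      · intro x hx; simp [hF_def, hfK x hx]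
    · apply int_aux
      · exact (hfU'.continuous.pow 2).mul (hVsm i).continuous
      · intro x hx; simp [hF_def, hfK x hx]
    · exact fun x _ => hFsm.differentiable h1top x
    · exact fun x _ => (hVsm i).differentiable h1top x
  have hint1 : ∀ i : Fin m, Integrable (fun x => F x * fderiv ℝ (V i) x (esingle i)) := by
    intro i
    apply int_aux
    · exact (hfU'.continuous.pow 2).mul (hfd_cont (V i) (hVsm i) (esingle i))
    · intro x hx; simp [hF_def, hfK x hx]
  have hint2 : ∀ i : Fin m, Integrable (fun x => fderiv ℝ F x (esingle i) * V i x) := by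
    intro i
    apply int_aux
    · exact (hfd_cont F hFsm (esingle i)).mul (hVsm i).continuous
    · intro x hx; simp [hfderivF0 x hx]
  have hsum : ∫ x, (∑ i, F x * fderiv ℝ (V i) x (esingle i))
      = - ∫ x, (∑ i, fderiv ℝ F x (esingle i) * V i x) := by
    rw [integral_finset_sum _ (fun i _ => hint1 i), integral_finset_sum _ (fun i _ => hint2 i)]
    rw [← Finset.sum_neg_distrib]
    exact Finset.sum_congr rfl (fun i _ => hIBP i)
  -- pointwise identity (A)
  have hdiffψ : ∀ x ∈ U, DifferentiableAt ℝ ψ x := fun x hx => (hψat x hx).differentiableAt h1top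
  have hA : ∀ x, (∑ i, F x * fderiv ℝ (V i) x (esingle i)) = L x := by
    intro x
    by_cases hx : x ∈ K
    · have hxO : x ∈ O := hKO hx
      have hxU : x ∈ U := hOU hxO
      have hψne : ψ x ≠ 0 := ne_of_gt (hψpos x hxU)
      have hVd : ∀ i, fderiv ℝ (V i) x (esingle i)
          = ψ x ^ (α-1) * fderiv ℝ (d i) x (esingle i)
            + d i x * ((α - 1) * ψ x ^ (α - 2) * fderiv ℝ ψ x (esingle i)) := by
        intro i
        have heq : V i =ᶠ[nhds x] fun y => (ψ y ^ (α-1)) * d i y := by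
          filter_upwards [hOopen.mem_nhds hxO] with y hy
          simp only [hV_def, if_pos (hOU hy), hχO y hy, one_mul]
        rw [heq.fderiv_eq]
        have h1 : HasFDerivAt (fun y => ψ y ^ (α-1))
            (((α-1) * ψ x ^ (α-1-1)) • fderiv ℝ ψ x) x :=
          (hdiffψ x hxU).hasFDerivAt.rpow_const (Or.inl hψne)
        have h2 : HasFDerivAt (d i) (fderiv ℝ (d i) x) x :=
          ((hdat i x hxU).differentiableAt h1top).hasFDerivAt
        have h3 := h1.mul h2
        rw [show (fun y => ψ y ^ (α-1) * d i y) = (fun y => ψ y ^ (α-1)) * d i from rfl, h3.fderiv]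
        have he : α - 1 - 1 = α - 2 := by ring
        simp only [ContinuousLinearMap.add_apply, ContinuousLinearMap.coe_smul',
          Pi.smul_apply, smul_eq_mul, he]
      have hlapx : lap ψ x = ∑ i, fderiv ℝ (d i) x (esingle i) := by
        rw [lap_eq]
      have hns : ‖gradient ψ x‖ ^ 2 = ∑ i, fderiv ℝ ψ x (esingle i) ^ 2 := norm_grad_sq ψ x
      have hdx : ∀ i, d i x = fderiv ℝ ψ x (esingle i) := fun i => rfl
      simp only [hF_def]
      calc ∑ i, f x ^ 2 * fderiv ℝ (V i) x (esingle i)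
          = ∑ i, ((ψ x ^ (α-1) * f x ^ 2) * fderiv ℝ (d i) x (esingle i)
              + ((α - 1) * ψ x ^ (α-2) * f x ^ 2) * fderiv ℝ ψ x (esingle i) ^ 2) := by
            refine Finset.sum_congr rfl fun i _ => ?_
            rw [hVd i, hdx i]
            ring
        _ = (ψ x ^ (α-1) * f x ^ 2) * (∑ i, fderiv ℝ (d i) x (esingle i))
              + ((α - 1) * ψ x ^ (α-2) * f x ^ 2) * (∑ i, fderiv ℝ ψ x (esingle i) ^ 2) := by
            rw [Finset.sum_add_distrib, Finset.mul_sum, Finset.mul_sum]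
        _ = L x := by
            simp only [hL_def, if_pos hxU]
            rw [hlapx, hns]
            ring
    · have hfx : f x = 0 := hfK x hx
      simp [hF_def, hL_def, hfx]
  -- pointwise identity (B)
  have hB : ∀ x, (∑ i, fderiv ℝ F x (esingle i) * V i x) = R x := by
    intro x
    by_cases hx : x ∈ K
    · have hxO : x ∈ O := hKO hx
      have hxU : x ∈ U := hOU hxO
      have hVx : ∀ i, V i x = ψ x ^ (α-1) * d i x := by
        intro i
        simp only [hV_def, if_pos hxU, hχO x hxO, one_mul]
      have hdx : ∀ i, d i x = fderiv ℝ ψ x (esingle i) := fun i => rfl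
      have hFd : fderiv ℝ F x = (2 * f x) • fderiv ℝ f x := by
        have h0 := (hfU'.differentiable h1top x).hasFDerivAt
        have heq : F = fun y => f y * f y := by
          funext y; simp only [hF_def]; ring
        rw [heq, show (fun y => f y * f y) = f * f from rfl, (h0.mul h0).fderiv, two_mul, add_smul]
      simp only [hR_def, if_pos hxU]
      calc ∑ i, fderiv ℝ F x (esingle i) * V i x
          = ∑ i, (2 * f x) * (ψ x ^ (α-1) * (fderiv ℝ f x (esingle i)
              * fderiv ℝ ψ x (esingle i))) := by
            refine Finset.sum_congr rfl fun i _ => ?_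
            rw [hFd, hVx i, hdx i]
            simp only [ContinuousLinearMap.coe_smul', Pi.smul_apply, smul_eq_mul]
            ring
        _ = (2 * f x) * (ψ x ^ (α-1)
              * ∑ i, fderiv ℝ f x (esingle i) * fderiv ℝ ψ x (esingle i)) := by
            rw [← Finset.mul_sum, ← Finset.mul_sum]
        _ = ψ x ^ (α - 1) * inner ℝ (gradient f x) (gradient ψ x) * (2 * f x) := by
            rw [inner_grad]
            ring
    · have hfx : f x = 0 := hfK x hx
      have hFd0 : fderiv ℝ F x = 0 := hfderivF0 x hx
      simp [hR_def, hfx, hFd0]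
  -- pointwise inequality (C) : c * G ≤ L
  have hC : ∀ x, c * G x ≤ L x := by
    intro x
    by_cases hx : x ∈ U
    · simp only [hG_def, hL_def, if_pos hx]
      have hψx := hψpos x hx
      have hp1 : (0:ℝ) < ψ x ^ (α-1) := Real.rpow_pos_of_pos hψx _
      have hpow : ψ x ^ (α - 2) = ψ x ^ (α-1) / ψ x := by
        rw [show α - 2 = (α-1) - 1 by ring, Real.rpow_sub hψx, Real.rpow_one]
      have h2 : (Q - 1) * (ψ x ^ (α-2) * ‖gradient ψ x‖ ^ 2) ≤ ψ x ^ (α-1) * lap ψ x := by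
        have h3 := mul_le_mul_of_nonneg_left (hψlower x hx) hp1.le
        calc (Q - 1) * (ψ x ^ (α-2) * ‖gradient ψ x‖ ^ 2)
            = ψ x ^ (α-1) * ((Q - 1) / ψ x * ‖gradient ψ x‖ ^ 2) := by
              rw [hpow]; field_simp
          _ ≤ ψ x ^ (α-1) * lap ψ x := h3
      have e2 := mul_le_mul_of_nonneg_right h2 (sq_nonneg (f x))
      have e3 : ((α - 1) * ψ x ^ (α-2) * ‖gradient ψ x‖ ^ 2 + ψ x ^ (α-1) * lap ψ x) * f x ^ 2
          - c * (ψ x ^ (α-2) * ‖gradient ψ x‖ ^ 2 * f x ^ 2)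
          = ψ x ^ (α-1) * lap ψ x * f x ^ 2
            - (Q - 1) * (ψ x ^ (α-2) * ‖gradient ψ x‖ ^ 2) * f x ^ 2 := by
        rw [hc_def]; ring
      nlinarith [e2, e3]
    · simp [hG_def, hL_def, if_neg hx]
  -- pointwise inequality (D)
  have hD : ∀ x, |R x| ≤ c / 2 * G x + 2 / c * Hh x := by
    intro x
    by_cases hx : x ∈ U
    · simp only [hR_def, hG_def, hH_def, if_pos hx]
      have hψx := hψpos x hx
      have hp : (0:ℝ) < ψ x ^ ((α-2)/2) := Real.rpow_pos_of_pos hψx _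
      have hq : (0:ℝ) < ψ x ^ (α/2) := Real.rpow_pos_of_pos hψx _
      have hpq : ψ x ^ ((α-2)/2) * ψ x ^ (α/2) = ψ x ^ (α-1) := by
        rw [← Real.rpow_add hψx, show (α-2)/2 + α/2 = α - 1 by ring]
      have hp2 : (ψ x ^ ((α-2)/2)) ^ 2 = ψ x ^ (α-2) := by
        rw [← Real.rpow_natCast (ψ x ^ ((α-2)/2)) 2, ← Real.rpow_mul hψx.le]
        norm_num
      have hq2 : (ψ x ^ (α/2)) ^ 2 = ψ x ^ α := by
        rw [← Real.rpow_natCast (ψ x ^ (α/2)) 2, ← Real.rpow_mul hψx.le]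
        norm_num
      have hinner : |(inner ℝ (gradient f x) (gradient ψ x) : ℝ)|
          ≤ ‖gradient f x‖ * ‖gradient ψ x‖ := abs_real_inner_le_norm _ _
      rw [← hpq, ← hp2, ← hq2]
      exact amgm_aux hc hp hq (norm_nonneg _) (norm_nonneg _) hinner
    · simp [hR_def, hG_def, hH_def, if_neg hx]
  -- the main estimate
  have hchain : c * (∫ x, G x) ≤ c / 2 * (∫ x, G x) + 2 / c * (∫ x, Hh x) := by
    have s1 : c * (∫ x, G x) = ∫ x, c * G x := (integral_const_mul c G).symm
    have s2 : (∫ x, c * G x) ≤ ∫ x, L x := integral_mono (hGint.const_mul c) hLint hC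
    have s3 : (∫ x, L x) = - ∫ x, R x := by
      rw [← integral_congr_ae (Filter.Eventually.of_forall hA), hsum,
        integral_congr_ae (Filter.Eventually.of_forall hB)]
    have s4 : (- ∫ x, R x) ≤ ∫ x, |R x| := by
      rw [← integral_neg]
      exact integral_mono hRint.neg hRint.abs (fun x => neg_le_abs (R x))
    have s5 : (∫ x, |R x|) ≤ ∫ x, (c / 2 * G x + 2 / c * Hh x) :=
      integral_mono hRint.abs ((hGint.const_mul _).add (hHint.const_mul _)) hD
    have s6 : (∫ x, (c / 2 * G x + 2 / c * Hh x))
        = c / 2 * (∫ x, G x) + 2 / c * (∫ x, Hh x) := by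
      rw [integral_add (hGint.const_mul _) (hHint.const_mul _), integral_const_mul,
        integral_const_mul]
    calc c * (∫ x, G x) = ∫ x, c * G x := s1
      _ ≤ ∫ x, L x := s2
      _ = - ∫ x, R x := s3
      _ ≤ ∫ x, |R x| := s4
      _ ≤ ∫ x, (c / 2 * G x + 2 / c * Hh x) := s5
      _ = c / 2 * (∫ x, G x) + 2 / c * (∫ x, Hh x) := s6
  have hfinal : (∫ x, G x) ≤ (2/c)^2 * ∫ x, Hh x := by
    have h2c : (0:ℝ) < 2/c := by positivity
    have h2 : c/2 * (∫ x, G x) ≤ 2/c * (∫ x, Hh x) := by linarith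
    have h3 := mul_le_mul_of_nonneg_left h2 h2c.le
    have h4 : 2/c * (c/2 * (∫ x, G x)) = ∫ x, G x := by
      field_simp
    rw [h4] at h3
    calc (∫ x, G x) ≤ 2/c * (2/c * (∫ x, Hh x)) := h3
      _ = (2/c)^2 * ∫ x, Hh x := by ring
  -- convert set integrals
  have hLHS : ∫ x in U, ψ x ^ α * (‖gradient ψ x‖ ^ 2 / (ψ x) ^ 2) * (f x) ^ 2 = ∫ x, G x := by
    rw [show (∫ x in U, ψ x ^ α * (‖gradient ψ x‖ ^ 2 / (ψ x) ^ 2) * (f x) ^ 2)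
        = ∫ x in U, G x from setIntegral_congr_fun hU.measurableSet (fun x hx => ?_)]
    · exact setIntegral_eq_integral_of_forall_compl_eq_zero
        (fun x hx => by simp [hG_def, if_neg hx])
    · have hψx := hψpos x hx
      have key : ψ x ^ (α-2) = ψ x ^ α / ψ x ^ (2:ℕ) := by
        rw [← Real.rpow_natCast (ψ x) 2, ← Real.rpow_sub hψx]
        norm_num
      simp only [hG_def, if_pos hx, key]
      ring
  have hRHS : ∫ x in U, ψ x ^ α * ‖gradient f x‖ ^ 2 = ∫ x, Hh x := by
    rw [show (∫ x in U, ψ x ^ α * ‖gradient f x‖ ^ 2) = ∫ x in U, Hh x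
      from setIntegral_congr_fun hU.measurableSet
        (fun x hx => by simp only [hH_def, if_pos hx])]
    exact setIntegral_eq_integral_of_forall_compl_eq_zero
      (fun x hx => by simp [hH_def, if_neg hx])
  rw [hLHS, hRHS]
  exact hfinal
end

section
/- Let m ≥ 1 and α ∈ ℝ with α ≠ 1. Then for every f ∈ C_c^∞(ℝ^{2m+1} ∩ {z > 0}) (smooth, compactly supported in the open half-space {z > 0}) the vertical half-space Hardy inequality on the Heisenberg group ∫ z^α·(4(|x|²+|y|²)/z²)·f² dξ ≤ (2/(α−1))²·∫ z^α·|∇_ℍ f|² dξ holds. -/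
open Real MeasureTheory

/-- The Heisenberg group `ℍ^m`, identified with `ℝ^m × ℝ^m × ℝ` with coordinates
`ξ = (x, y, z)` and Lebesgue measure. -/
abbrev Heis (m : ℕ) := EuclideanSpace ℝ (Fin m) × EuclideanSpace ℝ (Fin m) × ℝ

/-- The horizontal vector field `X_i = ∂_{x_i} + 2 y_i ∂_z` on the Heisenberg group. -/
noncomputable def Xd {m : ℕ} (i : Fin m) (f : Heis m → ℝ) (ξ : Heis m) : ℝ :=
  fderiv ℝ f ξ (EuclideanSpace.single i 1, 0, 0) + 2 * ξ.2.1 i * fderiv ℝ f ξ (0, 0, 1)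

/-- The horizontal vector field `Y_i = ∂_{y_i} - 2 x_i ∂_z` on the Heisenberg group. -/
noncomputable def Yd {m : ℕ} (i : Fin m) (f : Heis m → ℝ) (ξ : Heis m) : ℝ :=
  fderiv ℝ f ξ (0, EuclideanSpace.single i 1, 0) - 2 * ξ.1 i * fderiv ℝ f ξ (0, 0, 1)

/-- The squared length `|∇_ℍ f|²` of the horizontal gradient on the Heisenberg group. -/
noncomputable def hgradSq {m : ℕ} (f : Heis m → ℝ) (ξ : Heis m) : ℝ :=
  ∑ i : Fin m, ((Xd i f ξ) ^ 2 + (Yd i f ξ) ^ 2)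

instance heis2_haar (m : ℕ) :
    (volume : Measure (EuclideanSpace ℝ (Fin m) × ℝ)).IsAddHaarMeasure :=
  Measure.prod.instIsAddHaarMeasure _ _

instance heis_haar (m : ℕ) : (volume : Measure (Heis m)).IsAddHaarMeasure :=
  Measure.prod.instIsAddHaarMeasure _ _

noncomputable def pz (m : ℕ) : Heis m →L[ℝ] ℝ :=
  (ContinuousLinearMap.snd ℝ (EuclideanSpace ℝ (Fin m)) ℝ).comp
    (ContinuousLinearMap.snd ℝ (EuclideanSpace ℝ (Fin m)) (EuclideanSpace ℝ (Fin m) × ℝ))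

@[simp] lemma pz_apply {m : ℕ} (ξ : Heis m) : pz m ξ = ξ.2.2 := rfl

noncomputable def px {m : ℕ} (i : Fin m) : Heis m →L[ℝ] ℝ :=
  (EuclideanSpace.proj i).comp
    (ContinuousLinearMap.fst ℝ (EuclideanSpace ℝ (Fin m)) (EuclideanSpace ℝ (Fin m) × ℝ))

noncomputable def py {m : ℕ} (i : Fin m) : Heis m →L[ℝ] ℝ :=
  ((EuclideanSpace.proj i).comp
    (ContinuousLinearMap.fst ℝ (EuclideanSpace ℝ (Fin m)) ℝ)).comp
    (ContinuousLinearMap.snd ℝ (EuclideanSpace ℝ (Fin m)) (EuclideanSpace ℝ (Fin m) × ℝ))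

@[simp] lemma px_apply {m : ℕ} (i : Fin m) (ξ : Heis m) : px i ξ = ξ.1 i := rfl
@[simp] lemma py_apply {m : ℕ} (i : Fin m) (ξ : Heis m) : py i ξ = ξ.2.1 i := rfl

lemma int_fderiv_zero {m : ℕ} (g : Heis m → ℝ) (hg : ContDiff ℝ 1 g)
    (hc : HasCompactSupport g) (v : Heis m) : ∫ ξ, fderiv ℝ g ξ v = 0 := by
  have hgd : Differentiable ℝ g := hg.differentiable one_ne_zero
  have hcont : Continuous fun ξ => fderiv ℝ g ξ v :=
    (hg.continuous_fderiv one_ne_zero).clm_apply continuous_const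
  have h := integral_mul_fderiv_eq_neg_fderiv_mul_of_integrable
    (f := fun _ : Heis m => (1:ℝ)) (g := g) (v := v) (μ := volume)
    ?_ ?_ ?_ (fun x _ => differentiableAt_const (1:ℝ)) (fun x _ => hgd x)
  · simpa using h
  · simp only [fderiv_fun_const]; simp
  · simpa using hcont.integrable_of_hasCompactSupport (hc.fderiv_apply ℝ v)
  · simpa using hg.continuous.integrable_of_hasCompactSupport hc

lemma int_hderiv_zero {m : ℕ} (c : Heis m →L[ℝ] ℝ) (hcz : c (0, 0, 1) = 0)
    (g : Heis m → ℝ) (hg : ContDiff ℝ 1 g) (hc : HasCompactSupport g) (v : Heis m) :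
    ∫ ξ, (fderiv ℝ g ξ v + c ξ * fderiv ℝ g ξ ((0, 0, 1) : Heis m)) = 0 := by
  have hgd : Differentiable ℝ g := hg.differentiable one_ne_zero
  have hkey : ∀ ξ : Heis m, fderiv ℝ (fun η => c η * g η) ξ ((0,0,1) : Heis m)
      = c ξ * fderiv ℝ g ξ ((0,0,1) : Heis m) := by
    intro ξ
    rw [fderiv_fun_mul (c.differentiable.differentiableAt) (hgd ξ)]
    simp [ContinuousLinearMap.fderiv, hcz]
  have hcg : ContDiff ℝ 1 fun η : Heis m => c η * g η := (c.contDiff).mul hg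
  have hccg : HasCompactSupport fun η : Heis m => c η * g η := by
    apply HasCompactSupport.intro hc
    intro ξ hξ
    simp [image_eq_zero_of_notMem_tsupport hξ]
  have h1 := int_fderiv_zero g hg hc v
  have h2 := int_fderiv_zero _ hcg hccg ((0,0,1) : Heis m)
  have i1 : Integrable (fun ξ : Heis m => fderiv ℝ g ξ v) :=
    ((hg.continuous_fderiv one_ne_zero).clm_apply continuous_const).integrable_of_hasCompactSupport
      (hc.fderiv_apply ℝ v)
  have i2 : Integrable (fun ξ : Heis m => fderiv ℝ (fun η => c η * g η) ξ ((0,0,1) : Heis m)) :=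
    ((hcg.continuous_fderiv one_ne_zero).clm_apply continuous_const).integrable_of_hasCompactSupport
      (hccg.fderiv_apply ℝ _)
  have := integral_add i1 i2
  simp only [hkey] at this h2 i2
  rw [this, h1, h2, add_zero]

lemma isOpen_upper (m : ℕ) : IsOpen {ξ : Heis m | 0 < ξ.2.2} :=
  isOpen_lt continuous_const (continuous_snd.comp continuous_snd)

lemma glue_cont {m : ℕ} {f g : Heis m → ℝ} (h0 : tsupport f ⊆ {ξ : Heis m | 0 < ξ.2.2})
    (h1 : ContinuousOn g {ξ : Heis m | 0 < ξ.2.2})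
    (h2 : ∀ ξ, ξ ∉ tsupport f → g ξ = 0) : Continuous g := by
  rw [continuous_iff_continuousAt]
  intro ξ
  by_cases hz : 0 < ξ.2.2
  · exact h1.continuousAt ((isOpen_upper m).mem_nhds hz)
  · have hξ : ξ ∉ tsupport f := fun h => hz (h0 h)
    have hev : g =ᶠ[nhds ξ] (fun _ => (0:ℝ)) := by
      filter_upwards [(isClosed_tsupport f).isOpen_compl.mem_nhds hξ] with η hη
      exact h2 η hη
    exact ContinuousAt.congr continuousAt_const hev.symm

lemma glue_integrable {m : ℕ} {f g : Heis m → ℝ} (hsupp : HasCompactSupport f)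
    (h0 : tsupport f ⊆ {ξ : Heis m | 0 < ξ.2.2})
    (h1 : ContinuousOn g {ξ : Heis m | 0 < ξ.2.2})
    (h2 : ∀ ξ, ξ ∉ tsupport f → g ξ = 0) : Integrable g := by
  exact (glue_cont h0 h1 h2).integrable_of_hasCompactSupport
    (HasCompactSupport.intro hsupp h2)

lemma glue_contDiff {m : ℕ} {f g : Heis m → ℝ} (h0 : tsupport f ⊆ {ξ : Heis m | 0 < ξ.2.2})
    (h1 : ∀ ξ : Heis m, 0 < ξ.2.2 → ContDiffAt ℝ 1 g ξ)
    (h2 : ∀ ξ, ξ ∉ tsupport f → g ξ = 0) : ContDiff ℝ 1 g := by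
  rw [contDiff_iff_contDiffAt]
  intro ξ
  by_cases hz : 0 < ξ.2.2
  · exact h1 ξ hz
  · have hξ : ξ ∉ tsupport f := fun h => hz (h0 h)
    have hev : g =ᶠ[nhds ξ] (fun _ => (0:ℝ)) := by
      filter_upwards [(isClosed_tsupport f).isOpen_compl.mem_nhds hξ] with η hη
      exact h2 η hη
    exact (contDiffAt_const (c := (0:ℝ))).congr_of_eventuallyEq hev

lemma contOn_zrpow {m : ℕ} (β : ℝ) :
    ContinuousOn (fun ξ : Heis m => ξ.2.2 ^ β) {ξ : Heis m | 0 < ξ.2.2} := by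
  intro ξ hξ
  exact (ContinuousAt.rpow_const (continuous_snd.comp continuous_snd).continuousAt
    (Or.inl (ne_of_gt hξ))).continuousWithinAt

lemma young_ineq {z t a b w γ : ℝ} (hz : 0 < z) (ht : 0 < t) :
    |z ^ (γ - 1) * a * (2 * w * b)| ≤ t * (z ^ (γ - 2) * a ^ 2 * w ^ 2) + 1 / t * (z ^ γ * b ^ 2) := by
  set U : ℝ := z ^ (γ - 2) * a ^ 2 * w ^ 2 with hU
  set R : ℝ := z ^ γ * b ^ 2 with hR
  have hUnn : 0 ≤ U := by positivity
  have hRnn : 0 ≤ R := by positivity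
  have hsq : (z ^ (γ - 1)) ^ 2 = z ^ (γ - 2) * z ^ γ := by
    rw [sq, ← Real.rpow_add hz, ← Real.rpow_add hz]
    ring_nf
  have hX2 : (z ^ (γ - 1) * a * (2 * w * b)) ^ 2 = 4 * (U * R) := by
    have hr : (z ^ (γ - 1) * a * (2 * w * b)) ^ 2
        = (z ^ (γ - 1)) ^ 2 * (a ^ 2 * (4 * (w ^ 2 * b ^ 2))) := by ring
    rw [hU, hR, hr, hsq]; ring
  have hS : 0 ≤ t * U + 1 / t * R := by positivity
  have hle : (z ^ (γ - 1) * a * (2 * w * b)) ^ 2 ≤ (t * U + 1 / t * R) ^ 2 := by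
    rw [hX2]
    have htt : t * (1 / t) = 1 := by field_simp
    nlinarith [sq_nonneg (t * U - 1 / t * R), mul_nonneg hUnn hRnn]
  have h := abs_le_of_sq_le_sq' hle hS
  rw [abs_le]
  exact h

lemma key_c {m : ℕ} {α : ℝ} {f : Heis m → ℝ} (hf : ContDiff ℝ (⊤ : ℕ∞) f)
    (hsupp : HasCompactSupport f) (h0 : tsupport f ⊆ {ξ : Heis m | 0 < ξ.2.2})
    (c : Heis m →L[ℝ] ℝ) (v : Heis m)
    (hcz : c ((0, 0, 1) : Heis m) = 0) (hcv : c v = 0) (hvz : v.2.2 = 0) :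
    (α - 1) * ∫ ξ : Heis m, ξ.2.2 ^ (α - 2) * c ξ ^ 2 * f ξ ^ 2
      = - ∫ ξ : Heis m, ξ.2.2 ^ (α - 1) * c ξ *
          (2 * f ξ * (fderiv ℝ f ξ v + c ξ * fderiv ℝ f ξ ((0, 0, 1) : Heis m))) := by
  have hfd : Differentiable ℝ f := hf.differentiable (by simp)
  set g : Heis m → ℝ := fun ξ => ξ.2.2 ^ (α - 1) * c ξ * f ξ ^ 2 with hgdef
  have hzero : ∀ ξ, ξ ∉ tsupport f → g ξ = 0 := by
    intro ξ hξ
    simp [hgdef, image_eq_zero_of_notMem_tsupport hξ]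
  have hg1 : ∀ ξ : Heis m, 0 < ξ.2.2 → ContDiffAt ℝ 1 g ξ := by
    intro ξ hz
    have hz' : ContDiffAt ℝ 1 (fun ξ : Heis m => ξ.2.2 ^ (α - 1)) ξ :=
      (Real.contDiffAt_rpow_const_of_ne (ne_of_gt hz)).comp ξ ((pz m).contDiff.contDiffAt)
    exact (hz'.mul c.contDiff.contDiffAt).mul ((hf.contDiffAt.of_le (by simp)).pow 2)
  have hgc : ContDiff ℝ 1 g := glue_contDiff h0 hg1 hzero
  have hgcs : HasCompactSupport g := HasCompactSupport.intro hsupp hzero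
  have claim : ∀ ξ : Heis m,
      fderiv ℝ g ξ v + c ξ * fderiv ℝ g ξ ((0, 0, 1) : Heis m)
        = (α - 1) * (ξ.2.2 ^ (α - 2) * c ξ ^ 2 * f ξ ^ 2)
          + ξ.2.2 ^ (α - 1) * c ξ *
            (2 * f ξ * (fderiv ℝ f ξ v + c ξ * fderiv ℝ f ξ ((0, 0, 1) : Heis m))) := by
    intro ξ
    by_cases hz : 0 < ξ.2.2
    · have h1 : HasFDerivAt (fun ξ : Heis m => ξ.2.2 ^ (α - 1))
          (((α - 1) * ξ.2.2 ^ (α - 1 - 1)) • (pz m)) ξ :=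
        (Real.hasDerivAt_rpow_const (x := ξ.2.2) (p := α - 1) (Or.inl (ne_of_gt hz))).comp_hasFDerivAt ξ (pz m).hasFDerivAt
          |>.congr_of_eventuallyEq (Filter.Eventually.of_forall fun η => rfl)
      have h3 : HasFDerivAt f (fderiv ℝ f ξ) ξ := (hfd ξ).hasFDerivAt
      have h4 : HasFDerivAt (fun ξ : Heis m => f ξ ^ 2)
          ((2 * f ξ) • fderiv ℝ f ξ) ξ := by
        have h := h3.mul h3
        have e : (2 * f ξ) • fderiv ℝ f ξ = f ξ • fderiv ℝ f ξ + f ξ • fderiv ℝ f ξ := by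
          rw [two_mul, add_smul]
        rw [e]
        exact h.congr_fderiv rfl |>.congr_of_eventuallyEq (by
          filter_upwards with η; rw [Pi.mul_apply]; ring)
      have h5 := (h1.mul c.hasFDerivAt).mul h4
      have h6 : fderiv ℝ g ξ = _ := h5.fderiv
      rw [h6]
      rw [show α - 1 - 1 = α - 2 by ring]
      simp only [ContinuousLinearMap.add_apply, ContinuousLinearMap.coe_smul',
        Pi.smul_apply, smul_eq_mul, hcz, hcv, pz_apply, hvz, Pi.mul_apply]
      ring
    · have hξ : ξ ∉ tsupport f := fun h => hz (h0 h)
      have hf0 : f ξ = 0 := image_eq_zero_of_notMem_tsupport hξ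
      have hev : g =ᶠ[nhds ξ] (fun _ => (0 : ℝ)) := by
        filter_upwards [(isClosed_tsupport f).isOpen_compl.mem_nhds hξ] with η hη
        exact hzero η hη
      have hdz : fderiv ℝ g ξ = 0 := by
        rw [hev.fderiv_eq]; exact fderiv_const_apply 0
      simp [hdz, hf0]
  have hW : Continuous fun ξ : Heis m =>
      fderiv ℝ f ξ v + c ξ * fderiv ℝ f ξ ((0, 0, 1) : Heis m) := by
    have hF : Continuous (fderiv ℝ f) := hf.continuous_fderiv (by simp)
    exact ((hF.clm_apply continuous_const).add
      (c.continuous.mul (hF.clm_apply continuous_const)))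
  have hintA : Integrable (fun ξ : Heis m => ξ.2.2 ^ (α - 2) * c ξ ^ 2 * f ξ ^ 2) := by
    apply glue_integrable hsupp h0
    · exact ((contOn_zrpow (α - 2)).mul ((c.continuous.pow 2).continuousOn)).mul
        ((hf.continuous.pow 2).continuousOn)
    · intro ξ hξ; simp [image_eq_zero_of_notMem_tsupport hξ]
  have hintB : Integrable (fun ξ : Heis m => ξ.2.2 ^ (α - 1) * c ξ *
      (2 * f ξ * (fderiv ℝ f ξ v + c ξ * fderiv ℝ f ξ ((0, 0, 1) : Heis m)))) := by
    apply glue_integrable hsupp h0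
    · exact ((contOn_zrpow (α - 1)).mul c.continuous.continuousOn).mul
        ((continuous_const.mul hf.continuous).mul hW).continuousOn
    · intro ξ hξ; simp [image_eq_zero_of_notMem_tsupport hξ]
  have hib := int_hderiv_zero c hcz g hgc hgcs v
  rw [show (fun ξ : Heis m => fderiv ℝ g ξ v + c ξ * fderiv ℝ g ξ ((0, 0, 1) : Heis m))
      = fun ξ : Heis m => (α - 1) * (ξ.2.2 ^ (α - 2) * c ξ ^ 2 * f ξ ^ 2)
          + ξ.2.2 ^ (α - 1) * c ξ *
            (2 * f ξ * (fderiv ℝ f ξ v + c ξ * fderiv ℝ f ξ ((0, 0, 1) : Heis m)))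
      from funext claim] at hib
  rw [integral_add (hintA.const_mul _) hintB, integral_const_mul] at hib
  linarith

set_option maxHeartbeats 1000000 in
theorem vertical_halfspace_hardy_heisenberg (m : ℕ) (hm : 1 ≤ m)
    (α : ℝ) (hα : α ≠ 1)
    (f : Heis m → ℝ) (hf : ContDiff ℝ (⊤ : ℕ∞) f) (hsupp : HasCompactSupport f)
    (h0 : tsupport f ⊆ {ξ : Heis m | 0 < ξ.2.2}) :
    ∫ ξ : Heis m,
        ξ.2.2 ^ α * (4 * (‖ξ.1‖ ^ 2 + ‖ξ.2.1‖ ^ 2) / ξ.2.2 ^ 2) * (f ξ) ^ 2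
      ≤ (2 / (α - 1)) ^ 2 * ∫ ξ : Heis m, ξ.2.2 ^ α * hgradSq f ξ := by
  classical
  have hF : Continuous (fderiv ℝ f) := hf.continuous_fderiv (by simp)
  have hfc : Continuous f := hf.continuous
  -- continuity of the horizontal derivatives
  have hXc : ∀ i : Fin m, Continuous (Xd i f) := by
    intro i
    exact (hF.clm_apply continuous_const).add
      ((continuous_const.mul ((py i).continuous)).mul (hF.clm_apply continuous_const))
  have hYc : ∀ i : Fin m, Continuous (Yd i f) := by
    intro i
    exact (hF.clm_apply continuous_const).sub
      ((continuous_const.mul ((px i).continuous)).mul (hF.clm_apply continuous_const))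
  -- vanishing of derivatives off the support
  have hoff : ∀ ξ : Heis m, ξ ∉ tsupport f → fderiv ℝ f ξ = 0 := by
    intro ξ hξ
    have hev : f =ᶠ[nhds ξ] (fun _ => (0 : ℝ)) := by
      filter_upwards [(isClosed_tsupport f).isOpen_compl.mem_nhds hξ] with η hη
      exact image_eq_zero_of_notMem_tsupport hη
    rw [hev.fderiv_eq]; exact fderiv_const_apply 0
  have hgrad_off : ∀ ξ : Heis m, ξ ∉ tsupport f → hgradSq f ξ = 0 := by
    intro ξ hξ
    simp [hgradSq, Xd, Yd, hoff ξ hξ]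
  have hgrad_nonneg : ∀ ξ : Heis m, 0 ≤ hgradSq f ξ := by
    intro ξ
    exact Finset.sum_nonneg fun i _ => by positivity
  -- the per-coordinate key identities
  have hXi : ∀ i : Fin m,
      (α - 1) * ∫ ξ : Heis m, ξ.2.2 ^ (α - 2) * (2 * ξ.2.1 i) ^ 2 * f ξ ^ 2
        = -∫ ξ : Heis m, ξ.2.2 ^ (α - 1) * (2 * ξ.2.1 i) * (2 * f ξ * Xd i f ξ) := by
    intro i
    have h := key_c (α := α) hf hsupp h0 ((2 : ℝ) • py i)
      ((EuclideanSpace.single i 1, 0, 0) : Heis m) (by simp) (by simp) rfl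
    rw [show (fun ξ : Heis m => ξ.2.2 ^ (α - 2) * ((2 : ℝ) • py i) ξ ^ 2 * f ξ ^ 2)
        = fun ξ : Heis m => ξ.2.2 ^ (α - 2) * (2 * ξ.2.1 i) ^ 2 * f ξ ^ 2 from
      funext fun ξ => by
        simp only [ContinuousLinearMap.coe_smul', Pi.smul_apply, py_apply, smul_eq_mul]
        try ring] at h
    rw [show (fun ξ : Heis m => ξ.2.2 ^ (α - 1) * ((2 : ℝ) • py i) ξ *
          (2 * f ξ * (fderiv ℝ f ξ ((EuclideanSpace.single i 1, 0, 0) : Heis m)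
            + ((2 : ℝ) • py i) ξ * fderiv ℝ f ξ ((0, 0, 1) : Heis m))))
        = fun ξ : Heis m => ξ.2.2 ^ (α - 1) * (2 * ξ.2.1 i) * (2 * f ξ * Xd i f ξ) from
      funext fun ξ => by
        simp only [ContinuousLinearMap.coe_smul', Pi.smul_apply, py_apply, smul_eq_mul, Xd]
        try ring] at h
    exact h
  have hYi : ∀ i : Fin m,
      (α - 1) * ∫ ξ : Heis m, ξ.2.2 ^ (α - 2) * (2 * ξ.1 i) ^ 2 * f ξ ^ 2
        = -∫ ξ : Heis m, ξ.2.2 ^ (α - 1) * (-2 * ξ.1 i) * (2 * f ξ * Yd i f ξ) := by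
    intro i
    have h := key_c (α := α) hf hsupp h0 ((-2 : ℝ) • px i)
      ((0, EuclideanSpace.single i 1, 0) : Heis m) (by simp) (by simp) rfl
    rw [show (fun ξ : Heis m => ξ.2.2 ^ (α - 2) * ((-2 : ℝ) • px i) ξ ^ 2 * f ξ ^ 2)
        = fun ξ : Heis m => ξ.2.2 ^ (α - 2) * (2 * ξ.1 i) ^ 2 * f ξ ^ 2 from
      funext fun ξ => by
        simp only [ContinuousLinearMap.coe_smul', Pi.smul_apply, px_apply, smul_eq_mul]
        try ring] at h
    rw [show (fun ξ : Heis m => ξ.2.2 ^ (α - 1) * ((-2 : ℝ) • px i) ξ *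
          (2 * f ξ * (fderiv ℝ f ξ ((0, EuclideanSpace.single i 1, 0) : Heis m)
            + ((-2 : ℝ) • px i) ξ * fderiv ℝ f ξ ((0, 0, 1) : Heis m))))
        = fun ξ : Heis m => ξ.2.2 ^ (α - 1) * (-2 * ξ.1 i) * (2 * f ξ * Yd i f ξ) from
      funext fun ξ => by
        simp only [ContinuousLinearMap.coe_smul', Pi.smul_apply, px_apply, smul_eq_mul, Yd]
        try ring] at h
    exact h
  -- integrability of all pieces
  have hiAX : ∀ i : Fin m,
      Integrable (fun ξ : Heis m => ξ.2.2 ^ (α - 2) * (2 * ξ.2.1 i) ^ 2 * f ξ ^ 2) := by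
    intro i
    apply glue_integrable hsupp h0
    · exact ((contOn_zrpow (α - 2)).mul
        (((continuous_const.mul (py i).continuous).pow 2).continuousOn)).mul
        ((hfc.pow 2).continuousOn)
    · intro ξ hξ; simp [image_eq_zero_of_notMem_tsupport hξ]
  have hiAY : ∀ i : Fin m,
      Integrable (fun ξ : Heis m => ξ.2.2 ^ (α - 2) * (2 * ξ.1 i) ^ 2 * f ξ ^ 2) := by
    intro i
    apply glue_integrable hsupp h0
    · exact ((contOn_zrpow (α - 2)).mul
        (((continuous_const.mul (px i).continuous).pow 2).continuousOn)).mul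
        ((hfc.pow 2).continuousOn)
    · intro ξ hξ; simp [image_eq_zero_of_notMem_tsupport hξ]
  have hiBX : ∀ i : Fin m,
      Integrable (fun ξ : Heis m => ξ.2.2 ^ (α - 1) * (2 * ξ.2.1 i) * (2 * f ξ * Xd i f ξ)) := by
    intro i
    apply glue_integrable hsupp h0
    · exact ((contOn_zrpow (α - 1)).mul
        ((continuous_const.mul (py i).continuous).continuousOn)).mul
        (((continuous_const.mul hfc).mul (hXc i)).continuousOn)
    · intro ξ hξ; simp [image_eq_zero_of_notMem_tsupport hξ]
  have hiBY : ∀ i : Fin m,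
      Integrable (fun ξ : Heis m => ξ.2.2 ^ (α - 1) * (-2 * ξ.1 i) * (2 * f ξ * Yd i f ξ)) := by
    intro i
    apply glue_integrable hsupp h0
    · exact ((contOn_zrpow (α - 1)).mul
        ((continuous_const.mul (px i).continuous).continuousOn)).mul
        (((continuous_const.mul hfc).mul (hYc i)).continuousOn)
    · intro ξ hξ; simp [image_eq_zero_of_notMem_tsupport hξ]
  have hiL : Integrable (fun ξ : Heis m =>
      ξ.2.2 ^ α * (4 * (‖ξ.1‖ ^ 2 + ‖ξ.2.1‖ ^ 2) / ξ.2.2 ^ 2) * f ξ ^ 2) := by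
    apply glue_integrable hsupp h0
    · apply ContinuousOn.mul
      · apply ContinuousOn.mul (contOn_zrpow α)
        apply ContinuousOn.div
        · exact (continuous_const.mul ((continuous_fst.norm.pow 2).add
            ((continuous_fst.comp continuous_snd).norm.pow 2))).continuousOn
        · exact ((continuous_snd.comp continuous_snd).pow 2).continuousOn
        · intro ξ hξ
          have : (0:ℝ) < ξ.2.2 := hξ
          positivity
      · exact (hfc.pow 2).continuousOn
    · intro ξ hξ; simp [image_eq_zero_of_notMem_tsupport hξ]
  have hiR : Integrable (fun ξ : Heis m => ξ.2.2 ^ α * hgradSq f ξ) := by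
    apply glue_integrable hsupp h0
    · apply ContinuousOn.mul (contOn_zrpow α)
      have : Continuous (hgradSq f) := by
        apply continuous_finset_sum
        intro i _
        exact ((hXc i).pow 2).add ((hYc i).pow 2)
      exact this.continuousOn
    · intro ξ hξ; simp [hgrad_off ξ hξ]
  -- abbreviations
  have hnorm : ∀ x : EuclideanSpace ℝ (Fin m), ‖x‖ ^ 2 = ∑ i : Fin m, x i ^ 2 := by
    intro x
    rw [EuclideanSpace.norm_eq, Real.sq_sqrt (Finset.sum_nonneg fun i _ => sq_nonneg _)]
    exact Finset.sum_congr rfl fun i _ => by rw [Real.norm_eq_abs, sq_abs]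
  have hα' : α - 1 ≠ 0 := sub_ne_zero.2 hα
  have hA : (0:ℝ) < |α - 1| := abs_pos.2 hα'
  have ht : (0:ℝ) < |α - 1| / 2 := by positivity
  -- the pointwise identity for the sum of the A-terms
  have hSA : ∀ ξ : Heis m,
      (∑ i : Fin m, (ξ.2.2 ^ (α - 2) * (2 * ξ.2.1 i) ^ 2 * f ξ ^ 2
          + ξ.2.2 ^ (α - 2) * (2 * ξ.1 i) ^ 2 * f ξ ^ 2))
        = ξ.2.2 ^ α * (4 * (‖ξ.1‖ ^ 2 + ‖ξ.2.1‖ ^ 2) / ξ.2.2 ^ 2) * f ξ ^ 2 := by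
    intro ξ
    by_cases hfz : f ξ = 0
    · simp [hfz]
    · have hz : 0 < ξ.2.2 := h0 (subset_closure (Function.mem_support.2 hfz))
      have hz2 : ξ.2.2 ^ α = ξ.2.2 ^ (α - 2) * ξ.2.2 ^ 2 := by
        rw [← Real.rpow_natCast ξ.2.2 2, ← Real.rpow_add hz]
        norm_num
      have hzz : (ξ.2.2 : ℝ) ^ 2 ≠ 0 := by positivity
      calc (∑ i : Fin m, (ξ.2.2 ^ (α - 2) * (2 * ξ.2.1 i) ^ 2 * f ξ ^ 2
              + ξ.2.2 ^ (α - 2) * (2 * ξ.1 i) ^ 2 * f ξ ^ 2))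
          = ξ.2.2 ^ (α - 2) * f ξ ^ 2 * 4 * (∑ i : Fin m, (ξ.1 i ^ 2 + ξ.2.1 i ^ 2)) := by
            rw [Finset.mul_sum]
            exact Finset.sum_congr rfl fun i _ => by ring
        _ = ξ.2.2 ^ (α - 2) * f ξ ^ 2 * 4 * (‖ξ.1‖ ^ 2 + ‖ξ.2.1‖ ^ 2) := by
            rw [Finset.sum_add_distrib, hnorm ξ.1, hnorm ξ.2.1]
        _ = ξ.2.2 ^ α * (4 * (‖ξ.1‖ ^ 2 + ‖ξ.2.1‖ ^ 2) / ξ.2.2 ^ 2) * f ξ ^ 2 := by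
            rw [hz2]; field_simp
  -- nonnegativity of both integrands
  have hLnn : ∀ ξ : Heis m,
      0 ≤ ξ.2.2 ^ α * (4 * (‖ξ.1‖ ^ 2 + ‖ξ.2.1‖ ^ 2) / ξ.2.2 ^ 2) * f ξ ^ 2 := by
    intro ξ
    by_cases hfz : f ξ = 0
    · simp [hfz]
    · have hz : 0 < ξ.2.2 := h0 (subset_closure (Function.mem_support.2 hfz))
      have h1 : (0:ℝ) ≤ ξ.2.2 ^ α := Real.rpow_nonneg hz.le α
      positivity
  have hRnn : ∀ ξ : Heis m, 0 ≤ ξ.2.2 ^ α * hgradSq f ξ := by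
    intro ξ
    by_cases hz : 0 ≤ ξ.2.2
    · exact mul_nonneg (Real.rpow_nonneg hz α) (hgrad_nonneg ξ)
    · have hξ : ξ ∉ tsupport f := fun h => hz (le_of_lt (h0 h))
      simp [hgrad_off ξ hξ]
  -- pointwise bound on the B-terms
  have hSB : ∀ ξ : Heis m,
      |∑ i : Fin m, (ξ.2.2 ^ (α - 1) * (2 * ξ.2.1 i) * (2 * f ξ * Xd i f ξ)
          + ξ.2.2 ^ (α - 1) * (-2 * ξ.1 i) * (2 * f ξ * Yd i f ξ))|
        ≤ (|α - 1| / 2) * (ξ.2.2 ^ α * (4 * (‖ξ.1‖ ^ 2 + ‖ξ.2.1‖ ^ 2) / ξ.2.2 ^ 2) * f ξ ^ 2)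
          + (1 / (|α - 1| / 2)) * (ξ.2.2 ^ α * hgradSq f ξ) := by
    intro ξ
    by_cases hfz : f ξ = 0
    · have : (∑ i : Fin m, (ξ.2.2 ^ (α - 1) * (2 * ξ.2.1 i) * (2 * f ξ * Xd i f ξ)
          + ξ.2.2 ^ (α - 1) * (-2 * ξ.1 i) * (2 * f ξ * Yd i f ξ))) = 0 := by
        simp [hfz]
      rw [this, abs_zero, hfz]
      have := hRnn ξ
      have h1t : (0:ℝ) ≤ 1 / (|α - 1| / 2) := by positivity
      nlinarith
    · have hz : 0 < ξ.2.2 := h0 (subset_closure (Function.mem_support.2 hfz))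
      calc |∑ i : Fin m, (ξ.2.2 ^ (α - 1) * (2 * ξ.2.1 i) * (2 * f ξ * Xd i f ξ)
              + ξ.2.2 ^ (α - 1) * (-2 * ξ.1 i) * (2 * f ξ * Yd i f ξ))|
          ≤ ∑ i : Fin m, |ξ.2.2 ^ (α - 1) * (2 * ξ.2.1 i) * (2 * f ξ * Xd i f ξ)
              + ξ.2.2 ^ (α - 1) * (-2 * ξ.1 i) * (2 * f ξ * Yd i f ξ)| :=
            Finset.abs_sum_le_sum_abs _ _
        _ ≤ ∑ i : Fin m,
              (((|α - 1| / 2) * (ξ.2.2 ^ (α - 2) * (2 * ξ.2.1 i) ^ 2 * f ξ ^ 2)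
                  + (1 / (|α - 1| / 2)) * (ξ.2.2 ^ α * Xd i f ξ ^ 2))
                + ((|α - 1| / 2) * (ξ.2.2 ^ (α - 2) * (2 * ξ.1 i) ^ 2 * f ξ ^ 2)
                  + (1 / (|α - 1| / 2)) * (ξ.2.2 ^ α * Yd i f ξ ^ 2))) := by
            apply Finset.sum_le_sum
            intro i _
            have h1 := young_ineq (γ := α) (z := ξ.2.2) (t := |α - 1| / 2)
              (a := 2 * ξ.2.1 i) (b := Xd i f ξ) (w := f ξ) hz ht
            have h2 := young_ineq (γ := α) (z := ξ.2.2) (t := |α - 1| / 2)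
              (a := -2 * ξ.1 i) (b := Yd i f ξ) (w := f ξ) hz ht
            rw [show (-2 * ξ.1 i) ^ 2 = (2 * ξ.1 i) ^ 2 by ring] at h2
            calc |ξ.2.2 ^ (α - 1) * (2 * ξ.2.1 i) * (2 * f ξ * Xd i f ξ)
                  + ξ.2.2 ^ (α - 1) * (-2 * ξ.1 i) * (2 * f ξ * Yd i f ξ)|
                ≤ |ξ.2.2 ^ (α - 1) * (2 * ξ.2.1 i) * (2 * f ξ * Xd i f ξ)|
                  + |ξ.2.2 ^ (α - 1) * (-2 * ξ.1 i) * (2 * f ξ * Yd i f ξ)| := abs_add_le _ _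
              _ ≤ _ := add_le_add h1 h2
        _ = (|α - 1| / 2) * (∑ i : Fin m, (ξ.2.2 ^ (α - 2) * (2 * ξ.2.1 i) ^ 2 * f ξ ^ 2
              + ξ.2.2 ^ (α - 2) * (2 * ξ.1 i) ^ 2 * f ξ ^ 2))
            + (1 / (|α - 1| / 2)) * (ξ.2.2 ^ α * hgradSq f ξ) := by
            rw [hgradSq, Finset.mul_sum, Finset.mul_sum, Finset.mul_sum, ← Finset.sum_add_distrib]
            exact Finset.sum_congr rfl fun i _ => by ring
        _ = (|α - 1| / 2) * (ξ.2.2 ^ α * (4 * (‖ξ.1‖ ^ 2 + ‖ξ.2.1‖ ^ 2) / ξ.2.2 ^ 2) * f ξ ^ 2)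
            + (1 / (|α - 1| / 2)) * (ξ.2.2 ^ α * hgradSq f ξ) := by rw [hSA ξ]
  -- integrability of the full B-sum
  have hSBint : Integrable (fun ξ : Heis m =>
      ∑ i : Fin m, (ξ.2.2 ^ (α - 1) * (2 * ξ.2.1 i) * (2 * f ξ * Xd i f ξ)
        + ξ.2.2 ^ (α - 1) * (-2 * ξ.1 i) * (2 * f ξ * Yd i f ξ))) :=
    integrable_finset_sum _ fun i _ => (hiBX i).add (hiBY i)
  -- the key integral identity
  have hkey : (α - 1) * ∫ ξ : Heis m,
        ξ.2.2 ^ α * (4 * (‖ξ.1‖ ^ 2 + ‖ξ.2.1‖ ^ 2) / ξ.2.2 ^ 2) * f ξ ^ 2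
      = -∫ ξ : Heis m, ∑ i : Fin m,
          (ξ.2.2 ^ (α - 1) * (2 * ξ.2.1 i) * (2 * f ξ * Xd i f ξ)
            + ξ.2.2 ^ (α - 1) * (-2 * ξ.1 i) * (2 * f ξ * Yd i f ξ)) := by
    have e0 : ∫ ξ : Heis m, ξ.2.2 ^ α * (4 * (‖ξ.1‖ ^ 2 + ‖ξ.2.1‖ ^ 2) / ξ.2.2 ^ 2) * f ξ ^ 2
        = ∫ ξ : Heis m, ∑ i : Fin m, (ξ.2.2 ^ (α - 2) * (2 * ξ.2.1 i) ^ 2 * f ξ ^ 2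
            + ξ.2.2 ^ (α - 2) * (2 * ξ.1 i) ^ 2 * f ξ ^ 2) := by
      exact integral_congr_ae (Filter.Eventually.of_forall fun ξ => (hSA ξ).symm)
    have eA := integral_finset_sum (μ := volume) Finset.univ
      (f := fun (i : Fin m) (ξ : Heis m) => ξ.2.2 ^ (α - 2) * (2 * ξ.2.1 i) ^ 2 * f ξ ^ 2
        + ξ.2.2 ^ (α - 2) * (2 * ξ.1 i) ^ 2 * f ξ ^ 2) (fun i _ => (hiAX i).add (hiAY i))
    have eB := integral_finset_sum (μ := volume) Finset.univ
      (f := fun (i : Fin m) (ξ : Heis m) => ξ.2.2 ^ (α - 1) * (2 * ξ.2.1 i) * (2 * f ξ * Xd i f ξ)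
        + ξ.2.2 ^ (α - 1) * (-2 * ξ.1 i) * (2 * f ξ * Yd i f ξ)) (fun i _ => (hiBX i).add (hiBY i))
    rw [e0, eA, eB, Finset.mul_sum, ← Finset.sum_neg_distrib]
    apply Finset.sum_congr rfl
    intro i _
    rw [integral_add (hiAX i) (hiAY i), integral_add (hiBX i) (hiBY i), mul_add,
      hXi i, hYi i]
    ring
  -- putting everything together
  have hIL : 0 ≤ ∫ ξ : Heis m,
      ξ.2.2 ^ α * (4 * (‖ξ.1‖ ^ 2 + ‖ξ.2.1‖ ^ 2) / ξ.2.2 ^ 2) * f ξ ^ 2 :=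
    integral_nonneg hLnn
  have habs : |α - 1| * ∫ ξ : Heis m,
        ξ.2.2 ^ α * (4 * (‖ξ.1‖ ^ 2 + ‖ξ.2.1‖ ^ 2) / ξ.2.2 ^ 2) * f ξ ^ 2
      ≤ (|α - 1| / 2) * (∫ ξ : Heis m,
          ξ.2.2 ^ α * (4 * (‖ξ.1‖ ^ 2 + ‖ξ.2.1‖ ^ 2) / ξ.2.2 ^ 2) * f ξ ^ 2)
        + (1 / (|α - 1| / 2)) * ∫ ξ : Heis m, ξ.2.2 ^ α * hgradSq f ξ := by
    have h1 : |α - 1| * ∫ ξ : Heis m,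
        ξ.2.2 ^ α * (4 * (‖ξ.1‖ ^ 2 + ‖ξ.2.1‖ ^ 2) / ξ.2.2 ^ 2) * f ξ ^ 2
        = |(α - 1) * ∫ ξ : Heis m,
            ξ.2.2 ^ α * (4 * (‖ξ.1‖ ^ 2 + ‖ξ.2.1‖ ^ 2) / ξ.2.2 ^ 2) * f ξ ^ 2| := by
      rw [abs_mul, abs_of_nonneg hIL]
    rw [h1, hkey, abs_neg]
    have h2 : |∫ ξ : Heis m, ∑ i : Fin m,
          (ξ.2.2 ^ (α - 1) * (2 * ξ.2.1 i) * (2 * f ξ * Xd i f ξ)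
            + ξ.2.2 ^ (α - 1) * (-2 * ξ.1 i) * (2 * f ξ * Yd i f ξ))|
        ≤ ∫ ξ : Heis m, |∑ i : Fin m,
          (ξ.2.2 ^ (α - 1) * (2 * ξ.2.1 i) * (2 * f ξ * Xd i f ξ)
            + ξ.2.2 ^ (α - 1) * (-2 * ξ.1 i) * (2 * f ξ * Yd i f ξ))| := by
      have h2' := norm_integral_le_integral_norm (μ := volume)
        (f := fun ξ : Heis m => ∑ i : Fin m,
          (ξ.2.2 ^ (α - 1) * (2 * ξ.2.1 i) * (2 * f ξ * Xd i f ξ)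
            + ξ.2.2 ^ (α - 1) * (-2 * ξ.1 i) * (2 * f ξ * Yd i f ξ)))
      simp only [Real.norm_eq_abs] at h2'
      exact h2'
    refine le_trans h2 (le_trans (integral_mono hSBint.abs ?_ hSB) ?_)
    · exact (hiL.const_mul _).add (hiR.const_mul _)
    · rw [integral_add (hiL.const_mul _) (hiR.const_mul _), integral_const_mul,
        integral_const_mul]
  have hstep : (|α - 1| / 2) * ∫ ξ : Heis m,
        ξ.2.2 ^ α * (4 * (‖ξ.1‖ ^ 2 + ‖ξ.2.1‖ ^ 2) / ξ.2.2 ^ 2) * f ξ ^ 2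
      ≤ (1 / (|α - 1| / 2)) * ∫ ξ : Heis m, ξ.2.2 ^ α * hgradSq f ξ := by
    linarith
  have hsq : (2 / (α - 1)) ^ 2 = (1 / (|α - 1| / 2)) ^ 2 := by
    rw [one_div_div, div_pow, div_pow, sq_abs]
  rw [hsq]
  have hpos : (0:ℝ) < 1 / (|α - 1| / 2) := by positivity
  calc ∫ ξ : Heis m, ξ.2.2 ^ α * (4 * (‖ξ.1‖ ^ 2 + ‖ξ.2.1‖ ^ 2) / ξ.2.2 ^ 2) * f ξ ^ 2
      = (1 / (|α - 1| / 2)) * ((|α - 1| / 2) * ∫ ξ : Heis m,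
          ξ.2.2 ^ α * (4 * (‖ξ.1‖ ^ 2 + ‖ξ.2.1‖ ^ 2) / ξ.2.2 ^ 2) * f ξ ^ 2) := by
        rw [← mul_assoc, one_div_mul_cancel (ne_of_gt ht), one_mul]
    _ ≤ (1 / (|α - 1| / 2)) * ((1 / (|α - 1| / 2)) * ∫ ξ : Heis m,
          ξ.2.2 ^ α * hgradSq f ξ) := mul_le_mul_of_nonneg_left hstep hpos.le
    _ = (1 / (|α - 1| / 2)) ^ 2 * ∫ ξ : Heis m, ξ.2.2 ^ α * hgradSq f ξ := by ring
end
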